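/- Let h and I be independent random variables on a probability space (Ω,𝓕,P), where h is exponentially distributed with rate 1 and the law of I has density f_λ(x) = (λ/4)·(π/x)^{3/2}·exp(−π⁴λ²/(16x)) on (0,∞) for some λ > 0. Then for every β > 0 and d > 0, P(h ≥ β·d⁴·I) = exp(−π·λ·d²·β^{1/2}·(π/2)) = exp(−(π²/2)·λ·d²·√β). (This realizes Proposition 3.1 for path-loss exponent α = 4, where ρ = π/2: the successful transmission probability of the reference scheme is 𝓟ʳ = exp(−π λ₀ d² β^{2/α} ρ).) -/

import Mathlib

/-!
Conditioning on `I`, the exponential tail gives `P(h ≥ c I) = E[exp (-c I)]`, the Laplace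
transform of the Lévy density `f_λ` at `c = β d⁴`. Up to constants this is
`∫₀^∞ x^(-3/2) exp (-b²/x - t² x) dx` with `b = π² λ / 4`, `t = √c`; the substitution `x = u²`
and `-(b/u)² - (t u)² = -(t u - b/u)² - 2 b t` turn it into a Gaussian integral along
`v = t u - b/u`, whose Jacobian `t + b/u²` splits into two halves of equal integral under the
involution `u ↦ b / (t u)`. Hence `E[exp (-c I)] = exp (-2 b √c)`.
-/

open MeasureTheory ProbabilityTheory Real Set

section GlasserIntegral

variable {b t : ℝ}

theorem hasDerivAt_mul_sub_div {u : ℝ} (hu : u ≠ 0) :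
    HasDerivAt (fun u => t * u - b / u) (t + b / u ^ 2) u := by
  have := ((hasDerivAt_id u).const_mul t).fun_sub ((hasDerivAt_inv hu).const_mul b)
  simpa [div_eq_mul_inv, sub_neg_eq_add] using this

theorem strictMonoOn_mul_sub_div (hb : 0 < b) (ht : 0 < t) :
    StrictMonoOn (fun u => t * u - b / u) (Ioi 0) := fun x hx y _ hxy => by
  have : b / y < b / x := div_lt_div_of_pos_left hb hx hxy
  have : t * x < t * y := mul_lt_mul_of_pos_left hxy ht
  dsimp only
  linarith

theorem image_mul_sub_div_Ioi (hb : 0 < b) (ht : 0 < t) :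
    (fun u => t * u - b / u) '' Ioi 0 = univ := by
  refine eq_univ_of_forall fun y => ?_
  -- the positive root of `t u² - y u - b = 0`
  set D := √(y ^ 2 + 4 * b * t)
  have hD : D ^ 2 = y ^ 2 + 4 * b * t := sq_sqrt (by positivity)
  have hyD : 0 < y + D := by
    have : |y| < D := by
      rw [← sqrt_sq_eq_abs]; exact sqrt_lt_sqrt (sq_nonneg y) (by nlinarith)
    linarith [neg_abs_le y]
  refine ⟨(y + D) / (2 * t), div_pos hyD (by positivity), ?_⟩
  field_simp
  linear_combination hD

theorem integrableOn_deriv_mul_gaussian_comp (hb : 0 < b) (ht : 0 < t) :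
    IntegrableOn (fun u => (t + b / u ^ 2) * exp (-(t * u - b / u) ^ 2)) (Ioi 0) := by
  have := (integrableOn_image_iff_integrableOn_abs_deriv_smul measurableSet_Ioi
    (fun u hu => (hasDerivAt_mul_sub_div (b := b) (t := t) (ne_of_gt hu)).hasDerivWithinAt)
    (strictMonoOn_mul_sub_div hb ht).injOn fun x => exp (-x ^ 2)).1
  rw [image_mul_sub_div_Ioi hb ht, integrableOn_univ] at this
  refine (this (by simpa using integrable_exp_neg_mul_sq one_pos)).congr_fun
    (fun u (hu : 0 < u) => ?_) measurableSet_Ioi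
  dsimp only
  rw [abs_of_pos (by positivity), smul_eq_mul]

theorem integral_deriv_mul_gaussian_comp (hb : 0 < b) (ht : 0 < t) :
    ∫ u in Ioi 0, (t + b / u ^ 2) * exp (-(t * u - b / u) ^ 2) = √π := by
  have := integral_image_eq_integral_abs_deriv_smul measurableSet_Ioi
    (fun u hu => (hasDerivAt_mul_sub_div (b := b) (t := t) (ne_of_gt hu)).hasDerivWithinAt)
    (strictMonoOn_mul_sub_div hb ht).injOn fun x => exp (-x ^ 2)
  rw [image_mul_sub_div_Ioi hb ht, Measure.restrict_univ, (by simpa using integral_gaussian 1 :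
    ∫ x : ℝ, exp (-x ^ 2) = √π)] at this
  rw [this]
  refine setIntegral_congr_fun measurableSet_Ioi fun u (hu : 0 < u) => ?_
  rw [abs_of_pos (by positivity), smul_eq_mul]

/-- The involution `u ↦ b / (t u)` of `(0, ∞)` reverses the sign of `t u - b / u` and exchanges
the two terms of its derivative. -/
theorem integral_mul_exp_eq_integral_div_sq_mul_exp (hb : 0 < b) (ht : 0 < t) :
    ∫ u in Ioi 0, t * exp (-(t * u - b / u) ^ 2)
      = ∫ u in Ioi 0, b / u ^ 2 * exp (-(t * u - b / u) ^ 2) := by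
  have hinj : InjOn (fun u => b / t * u⁻¹) (Ioi 0) := fun x _ y _ hxy =>
    inv_injective (mul_left_cancel₀ (by positivity) hxy)
  have himage : (fun u => b / t * u⁻¹) '' Ioi 0 = Ioi 0 := by
    refine Subset.antisymm (image_subset_iff.2 fun u (hu : 0 < u) =>
      show 0 < b / t * u⁻¹ by positivity) ?_
    exact fun y (hy : (0 : ℝ) < y) => ⟨b / (t * y), mem_Ioi.2 (by positivity), by field_simp⟩
  have := integral_image_eq_integral_abs_deriv_smul measurableSet_Ioi
    (fun u (hu : 0 < u) => ((hasDerivAt_inv hu.ne').const_mul (b / t)).hasDerivWithinAt) hinj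
    fun u => t * exp (-(t * u - b / u) ^ 2)
  rw [himage] at this
  rw [this]
  refine setIntegral_congr_fun measurableSet_Ioi fun u (hu : 0 < u) => ?_
  have hflip : t * (b / t * u⁻¹) - b / (b / t * u⁻¹) = -(t * u - b / u) := by
    field_simp
    ring
  rw [mul_neg, abs_neg, abs_of_pos (by positivity), smul_eq_mul, hflip, neg_sq]
  field_simp

theorem integrableOn_mul_exp_of_le (hb : 0 < b) (ht : 0 < t) {f : ℝ → ℝ} (hf : Measurable f)
    (hfle : ∀ u, 0 < u → 0 ≤ f u ∧ f u ≤ t + b / u ^ 2) :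
    IntegrableOn (fun u => f u * exp (-(t * u - b / u) ^ 2)) (Ioi 0) := by
  refine (integrableOn_deriv_mul_gaussian_comp hb ht).mono' (by fun_prop)
    ((ae_restrict_iff' measurableSet_Ioi).2 (.of_forall fun u (hu : 0 < u) => ?_))
  rw [norm_mul, norm_of_nonneg (hfle u hu).1, norm_of_nonneg (exp_pos _).le]
  exact mul_le_mul_of_nonneg_right (hfle u hu).2 (exp_pos _).le

theorem integrableOn_div_sq_mul_exp (hb : 0 < b) (ht : 0 < t) :
    IntegrableOn (fun u => b / u ^ 2 * exp (-(t * u - b / u) ^ 2)) (Ioi 0) :=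
  integrableOn_mul_exp_of_le hb ht (by fun_prop) fun u _ =>
    ⟨by positivity, le_add_of_nonneg_left ht.le⟩

theorem integral_div_sq_mul_exp (hb : 0 < b) (ht : 0 < t) :
    ∫ u in Ioi 0, b / u ^ 2 * exp (-(t * u - b / u) ^ 2) = √π / 2 := by
  have ht_int := integrableOn_mul_exp_of_le hb ht measurable_const fun u _ =>
    ⟨ht.le, le_add_of_nonneg_right (by positivity)⟩
  have := integral_deriv_mul_gaussian_comp hb ht
  simp_rw [add_mul] at this
  rw [integral_add ht_int (integrableOn_div_sq_mul_exp hb ht),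
    integral_mul_exp_eq_integral_div_sq_mul_exp hb ht] at this
  linarith

theorem rpow_neg_three_halves_mul_exp_comp_sq {u : ℝ} (hb : 0 < b) (hu : 0 < u) :
    (|(2 : ℝ)| * u ^ ((2 : ℝ) - 1)) •
        ((u ^ (2 : ℝ)) ^ (-(3 : ℝ) / 2) * exp (-(b ^ 2 / u ^ (2 : ℝ)) - t ^ 2 * u ^ (2 : ℝ)))
      = 2 / b * exp (-(2 * b * t)) * (b / u ^ 2 * exp (-(t * u - b / u) ^ 2)) := by
  have hu3 : (u ^ (2 : ℝ)) ^ (-(3 : ℝ) / 2) = (u ^ 3)⁻¹ := by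
    rw [← rpow_mul hu.le, ← rpow_natCast, ← rpow_neg hu.le]
    norm_num
  have hexp : -(b ^ 2 / u ^ 2) - t ^ 2 * u ^ 2 = -(t * u - b / u) ^ 2 + -(2 * b * t) := by
    field_simp
    ring
  rw [hu3, rpow_two, hexp, exp_add, smul_eq_mul]
  norm_num
  field_simp

theorem integrableOn_rpow_neg_three_halves_mul_exp (hb : 0 < b) (ht : 0 < t) :
    IntegrableOn (fun x => x ^ (-(3 : ℝ) / 2) * exp (-(b ^ 2 / x) - t ^ 2 * x)) (Ioi 0) := by
  rw [← integrableOn_Ioi_comp_rpow_iff _ two_ne_zero]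
  exact IntegrableOn.congr_fun ((integrableOn_div_sq_mul_exp hb ht).const_mul _)
    (fun u hu => (rpow_neg_three_halves_mul_exp_comp_sq hb hu).symm) measurableSet_Ioi

theorem integral_rpow_neg_three_halves_mul_exp (hb : 0 < b) (ht : 0 < t) :
    ∫ x in Ioi 0, x ^ (-(3 : ℝ) / 2) * exp (-(b ^ 2 / x) - t ^ 2 * x)
      = √π / b * exp (-(2 * b * t)) := by
  rw [← integral_comp_rpow_Ioi _ two_ne_zero,
    setIntegral_congr_fun measurableSet_Ioi fun u hu =>
      rpow_neg_three_halves_mul_exp_comp_sq hb hu,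
    integral_const_mul, integral_div_sq_mul_exp hb ht]
  field_simp

end GlasserIntegral

theorem levyDensity_mul_exp_eq {l c x : ℝ} (hc : 0 ≤ c) (hx : 0 < x) :
    l / 4 * (π / x) ^ ((3 : ℝ) / 2) * exp (-(π ^ 4 * l ^ 2 / (16 * x))) * exp (-(c * x))
      = l / 4 * π ^ ((3 : ℝ) / 2) *
          (x ^ (-(3 : ℝ) / 2) * exp (-((π ^ 2 * l / 4) ^ 2 / x) - √c ^ 2 * x)) := by
  rw [div_rpow pi_pos.le hx.le, neg_div, rpow_neg hx.le, sq_sqrt hc, sub_eq_add_neg, exp_add]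
  field_simp
  ring_nf

theorem integrableOn_levyDensity_mul_exp {l c : ℝ} (hl : 0 < l) (hc : 0 < c) :
    IntegrableOn (fun x =>
      l / 4 * (π / x) ^ ((3 : ℝ) / 2) * exp (-(π ^ 4 * l ^ 2 / (16 * x))) * exp (-(c * x)))
      (Ioi 0) :=
  IntegrableOn.congr_fun (((integrableOn_rpow_neg_three_halves_mul_exp
    (by positivity) (sqrt_pos.2 hc)).const_mul _))
    (fun _ hx => (levyDensity_mul_exp_eq hc.le hx).symm) measurableSet_Ioi

theorem integral_levyDensity_mul_exp {l c : ℝ} (hl : 0 < l) (hc : 0 < c) :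
    ∫ x in Ioi 0,
        l / 4 * (π / x) ^ ((3 : ℝ) / 2) * exp (-(π ^ 4 * l ^ 2 / (16 * x))) * exp (-(c * x))
      = exp (-(π ^ 2 / 2 * l * √c)) := by
  rw [setIntegral_congr_fun measurableSet_Ioi fun x hx => levyDensity_mul_exp_eq hc.le hx,
    integral_const_mul, integral_rpow_neg_three_halves_mul_exp (by positivity)
      (sqrt_pos.2 hc)]
  have hpi : π ^ ((3 : ℝ) / 2) * √π = π ^ 2 := by
    rw [sqrt_eq_rpow, ← rpow_add pi_pos]; norm_num
  rw [show 2 * (π ^ 2 * l / 4) * √c = π ^ 2 / 2 * l * √c by ring]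
  field_simp
  linear_combination hpi

theorem measure_mul_le_eq_lintegral {Ω : Type*} [MeasurableSpace Ω] {P : Measure Ω}
    [IsFiniteMeasure P] {X Y : Ω → ℝ} (hX : Measurable X) (hY : Measurable Y)
    (hXY : IndepFun X Y P) (c : ℝ) :
    P {ω | c * Y ω ≤ X ω} = ∫⁻ y, P.map X (Ici (c * y)) ∂P.map Y := by
  have hS : MeasurableSet {p : ℝ × ℝ | c * p.2 ≤ p.1} :=
    measurableSet_le (measurable_snd.const_mul c) measurable_fst
  calc P {ω | c * Y ω ≤ X ω} = P.map (fun ω => (X ω, Y ω)) {p | c * p.2 ≤ p.1} := by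
        rw [Measure.map_apply (hX.prodMk hY) hS]; rfl
    _ = ((P.map X).prod (P.map Y)) {p | c * p.2 ≤ p.1} := by
        rw [(indepFun_iff_map_prod_eq_prod_map_map hX.aemeasurable hY.aemeasurable).1 hXY]
    _ = ∫⁻ y, P.map X (Ici (c * y)) ∂P.map Y := Measure.prod_apply_symm hS

theorem expMeasure_Ici {r s : ℝ} (hr : 0 < r) (hs : 0 ≤ s) :
    expMeasure r (Ici s) = ENNReal.ofReal (exp (-(r * s))) := by
  have : IsProbabilityMeasure (expMeasure r) := isProbabilityMeasure_expMeasure hr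
  have hatom : expMeasure r {s} = 0 :=
    withDensity_absolutelyContinuous _ _ (measure_singleton s)
  rw [← measure_congr (Ioi_ae_eq_Ici' hatom), ← ofReal_measureReal, ← compl_Iic,
    measureReal_compl measurableSet_Iic, ← cdf_eq_real, cdf_expMeasure_eq hr, if_pos hs,
    probReal_univ, sub_sub_cancel]

theorem lintegral_withDensity_ofReal_indicator_Ioi {f : ℝ → ℝ} (hf : Measurable f)
    (g : ℝ → ENNReal) :
    ∫⁻ x, g x ∂volume.withDensity (fun x => ENNReal.ofReal ((Ioi 0).indicator f x))
      = ∫⁻ x in Ioi 0, ENNReal.ofReal (f x) * g x := by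
  have : (fun x => ENNReal.ofReal ((Ioi 0).indicator f x))
      = (Ioi 0).indicator (fun x => ENNReal.ofReal (f x)) :=
    (indicator_comp_of_zero ENNReal.ofReal_zero).symm
  rw [this, withDensity_indicator measurableSet_Ioi,
    lintegral_withDensity_eq_lintegral_mul_non_measurable _ (by fun_prop)
      (.of_forall fun _ => ENNReal.ofReal_lt_top)]
  rfl

/-- Proposition 3.1 for `α = 4` (where `ρ = π/2`): if `h` is unit-rate
exponential, independent of the interference `I` whose law has the Lévy
density `f_λ` of Lemma 3.1 on `(0,∞)`, then the success probability of the
reference scheme is `P(h ≥ β d⁴ I) = exp(−π λ d² √β · (π/2)) = exp(−(π²/2) λ d² √β)`. -/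
theorem stmt_12 {Ω : Type*} [MeasurableSpace Ω] (P : Measure Ω) [IsProbabilityMeasure P]
    (h I : Ω → ℝ) (hmh : Measurable h) (hmI : Measurable I)
    (l : ℝ) (hl : 0 < l)
    (hexp : Measure.map h P = expMeasure 1)
    (hindep : IndepFun h I P)
    (hlaw : Measure.map I P = volume.withDensity fun x =>
      ENNReal.ofReal (Set.indicator (Set.Ioi (0 : ℝ))
        (fun x => l / 4 * (π / x) ^ ((3 : ℝ) / 2) * Real.exp (-(π ^ 4 * l ^ 2 / (16 * x)))) x))
    (β d : ℝ) (hβ : 0 < β) (hd : 0 < d) :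
    (P {ω | β * d ^ 4 * I ω ≤ h ω}).toReal
        = Real.exp (-(π * l * d ^ 2 * Real.sqrt β * (π / 2))) ∧
      Real.exp (-(π * l * d ^ 2 * Real.sqrt β * (π / 2)))
        = Real.exp (-(π ^ 2 / 2 * l * d ^ 2 * Real.sqrt β)) := by
  refine ⟨?_, by ring_nf⟩
  have hc : 0 < β * d ^ 4 := by positivity
  have hsucc : P {ω | β * d ^ 4 * I ω ≤ h ω} = ∫⁻ x in Ioi 0, ENNReal.ofReal (l / 4 *
      (π / x) ^ ((3 : ℝ) / 2) * exp (-(π ^ 4 * l ^ 2 / (16 * x))) * exp (-(β * d ^ 4 * x))) := by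
    rw [measure_mul_le_eq_lintegral hmh hmI hindep, hexp, hlaw,
      lintegral_withDensity_ofReal_indicator_Ioi (by fun_prop)]
    refine setLIntegral_congr_fun measurableSet_Ioi fun x (hx : 0 < x) => ?_
    rw [expMeasure_Ici one_pos (by positivity), one_mul, ← ENNReal.ofReal_mul (by positivity)]
  rw [hsucc, ← ofReal_integral_eq_lintegral_ofReal (integrableOn_levyDensity_mul_exp hl hc)
    ((ae_restrict_iff' measurableSet_Ioi).2 (.of_forall fun x (hx : 0 < x) => by positivity)),
    integral_levyDensity_mul_exp hl hc, ENNReal.toReal_ofReal (exp_pos _).le,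
    sqrt_mul hβ.le, show d ^ 4 = (d ^ 2) ^ 2 by ring, sqrt_sq (by positivity)]
  ring_nf
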